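/- arXiv:2203.09874 — 2 statements merged into one kernel-verified Lean document; each statement's English description precedes it below -/
import Mathlib

section
/- Let Ω ⊆ ℝ^d be a measurable set of finite Lebesgue measure, let β : ℝ → ℝ be nondecreasing and continuous with β(0) = 0, let π : ℝ → ℝ be Lipschitz with Lipschitz constant K ≥ 0, and let h be a real number with 0 < h < 1 and h·K < 1. Then for every G ∈ L²(Ω) there exists a function φ ∈ L²(Ω), unique up to equality almost everywhere, such that φ(x) + h·φ(x) + h²·β(φ(x)) + h²·π(φ(x)) = G(x) for almost every x ∈ Ω; moreover the compositions β ∘ φ and π ∘ φ belong to L²(Ω). -/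
open MeasureTheory Filter Function

/-! The map `F s = (1 + h) s + h² β s + h² π s` is strongly monotone with constant
`1 + h - h² K > 0`: the monotone term `h² β` only helps and the Lipschitz term `h² π` costs at
most `h² K`. A continuous strongly monotone map of `ℝ` is onto and its inverse is Lipschitz, so
`φ = F⁻¹ ∘ G` is in `L²(Ω)` because `Ω` has finite measure; then `π ∘ φ ∈ L²` by Lipschitz
continuity, `β ∘ φ = h⁻² (G - (1 + h) φ - h² π ∘ φ)`, and uniqueness is injectivity of `F`. -/

def StronglyMonotoneWith (c : ℝ) (f : ℝ → ℝ) : Prop :=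
  ∀ ⦃s t : ℝ⦄, s ≤ t → c * (t - s) ≤ f t - f s

theorem stronglyMonotoneWith_const_mul (c : ℝ) : StronglyMonotoneWith c (fun s => c * s) :=
  fun s t _ => (mul_sub c t s).le

theorem LipschitzWith.comp_memLp_of_isFiniteMeasure {α E F : Type*} [MeasurableSpace α]
    {μ : Measure α} [IsFiniteMeasure μ] [NormedAddCommGroup E] [NormedAddCommGroup F]
    {p : ENNReal} {K : NNReal} {f : α → E} {g : E → F} (hg : LipschitzWith K g)
    (hf : MemLp f p μ) : MemLp (g ∘ f) p μ := by
  have hg0 : LipschitzWith K fun x => g x - g 0 := by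
    simpa using hg.sub (LipschitzWith.const (g 0))
  convert (hg0.comp_memLp (sub_self _) hf).add (memLp_const (g 0)) using 1
  funext x
  simp

namespace StronglyMonotoneWith

variable {c : ℝ} {f g : ℝ → ℝ}

theorem add_monotone (hf : StronglyMonotoneWith c f) (hg : Monotone g) :
    StronglyMonotoneWith c (f + g) := fun s t hst => by
  have := hg hst
  simp only [Pi.add_apply]
  linarith [hf hst]

theorem add_lipschitz (hf : StronglyMonotoneWith c f) {L : ℝ}
    (hg : ∀ x y, |g x - g y| ≤ L * |x - y|) : StronglyMonotoneWith (c - L) (f + g) :=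
  fun s t hst => by
  have hgts : -(L * (t - s)) ≤ g t - g s :=
    (abs_le.mp (abs_of_nonneg (sub_nonneg.mpr hst) ▸ hg t s)).1
  simp only [Pi.add_apply]
  linarith [hf hst]

theorem mul_abs_sub_le (hf : StronglyMonotoneWith c f) (hc : 0 ≤ c) (s t : ℝ) :
    c * |t - s| ≤ |f t - f s| := by
  rcases le_total s t with hst | hts
  · have := hf hst
    rw [abs_of_nonneg (sub_nonneg.mpr hst), abs_of_nonneg (by nlinarith)]
    exact this
  · have := hf hts
    rw [abs_sub_comm, abs_sub_comm (f t), abs_of_nonneg (sub_nonneg.mpr hts),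
      abs_of_nonneg (by nlinarith)]
    exact this

theorem strictMono (hf : StronglyMonotoneWith c f) (hc : 0 < c) : StrictMono f :=
  fun _ _ hst => sub_pos.mp ((mul_pos hc (sub_pos.mpr hst)).trans_le (hf hst.le))

theorem antilipschitzWith (hf : StronglyMonotoneWith c f) (hc : 0 < c) :
    AntilipschitzWith (Real.toNNReal c⁻¹) f :=
  .of_le_mul_dist fun s t => by
    rw [Real.coe_toNNReal _ (inv_nonneg.mpr hc.le), Real.dist_eq, Real.dist_eq,
      le_inv_mul_iff₀ hc]
    exact hf.mul_abs_sub_le hc.le t s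

theorem tendsto_atTop (hf : StronglyMonotoneWith c f) (hc : 0 < c) : Tendsto f atTop atTop :=
  tendsto_atTop_mono' _ ((eventually_ge_atTop 0).mono fun t ht => by
    simp only [id]; linarith [hf ht])
    (tendsto_atTop_add_const_left _ (f 0) (tendsto_id.const_mul_atTop hc))

theorem tendsto_atBot (hf : StronglyMonotoneWith c f) (hc : 0 < c) : Tendsto f atBot atBot :=
  tendsto_atBot_mono' _ ((eventually_le_atBot 0).mono fun s hs => by
    simp only [id]; linarith [hf hs])
    (tendsto_atBot_add_const_left _ (f 0) (tendsto_id.const_mul_atBot hc))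

theorem surjective (hf : StronglyMonotoneWith c f) (hc : 0 < c) (hcont : Continuous f) :
    Surjective f :=
  hcont.surjective (hf.tendsto_atTop hc) (hf.tendsto_atBot hc)

theorem exists_memLp_comp_eq {α : Type*} [MeasurableSpace α] {μ : Measure α}
    [IsFiniteMeasure μ] {p : ENNReal} (hf : StronglyMonotoneWith c f) (hc : 0 < c) (hcont : Continuous f) {G : α → ℝ}
    (hG : MemLp G p μ) : ∃ φ : α → ℝ, MemLp φ p μ ∧ ∀ x, f (φ x) = G x :=
  have hsurj := hf.surjective hc hcont
  ⟨surjInv hsurj ∘ G,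
    ((hf.antilipschitzWith hc).to_rightInverse
      (rightInverse_surjInv hsurj)).comp_memLp_of_isFiniteMeasure hG,
    fun x => surjInv_eq hsurj (G x)⟩

end StronglyMonotoneWith

theorem discrete_phase_equation_L2_existence_uniqueness_general
    (d : ℕ) (Ω : Set (Fin d → ℝ))
    (hΩfin : volume Ω < ⊤)
    (β π : ℝ → ℝ) (hβmono : Monotone β) (hβcont : Continuous β)
    (K : ℝ) (hπ : ∀ x y : ℝ, |π x - π y| ≤ K * |x - y|)
    (h : ℝ) (hh0 : 0 < h) (hhK : h * K < 1)
    (G : (Fin d → ℝ) → ℝ) (hG : MemLp G 2 (volume.restrict Ω)) :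
    ∃ φ : (Fin d → ℝ) → ℝ,
      MemLp φ 2 (volume.restrict Ω) ∧
      (∀ᵐ x ∂(volume.restrict Ω),
        φ x + h * φ x + h ^ 2 * β (φ x) + h ^ 2 * π (φ x) = G x) ∧
      MemLp (β ∘ φ) 2 (volume.restrict Ω) ∧
      MemLp (π ∘ φ) 2 (volume.restrict Ω) ∧
      ∀ ψ : (Fin d → ℝ) → ℝ,
        MemLp ψ 2 (volume.restrict Ω) →
        (∀ᵐ x ∂(volume.restrict Ω),
          ψ x + h * ψ x + h ^ 2 * β (ψ x) + h ^ 2 * π (ψ x) = G x) →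
        ψ =ᵐ[volume.restrict Ω] φ := by
  have : IsFiniteMeasure (volume.restrict Ω) := ⟨by simpa using hΩfin⟩
  have hπL : LipschitzWith K.toNNReal π := .of_dist_le' (by simpa only [Real.dist_eq] using hπ)
  set F := (fun s => (1 + h) * s) + (fun s => h ^ 2 * β s) + fun s => h ^ 2 * π s with hF
  have hFeq (s : ℝ) : F s = s + h * s + h ^ 2 * β s + h ^ 2 * π s := by
    simp only [hF, Pi.add_apply]; ring
  have hFmono : StronglyMonotoneWith (1 + h - h ^ 2 * K) F :=
    ((stronglyMonotoneWith_const_mul _).add_monotone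
      (hβmono.const_mul (sq_nonneg h))).add_lipschitz fun x y => by
        rw [← mul_sub, abs_mul, abs_sq, mul_assoc]
        exact mul_le_mul_of_nonneg_left (hπ x y) (sq_nonneg h)
  have hc : 0 < 1 + h - h ^ 2 * K := by nlinarith
  obtain ⟨φ, hφ, hFφ⟩ := hFmono.exists_memLp_comp_eq hc
    (by have := hπL.continuous; rw [hF]; fun_prop) hG
  have hπφ : MemLp (π ∘ φ) 2 (volume.restrict Ω) := hπL.comp_memLp_of_isFiniteMeasure hφ
  have hβφ : β ∘ φ = fun x => (h ^ 2)⁻¹ * (G x - (1 + h) * φ x - h ^ 2 * π (φ x)) := by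
    funext x
    rw [← hFφ x]
    field_simp
    simp only [hF, Pi.add_apply, comp_apply]
    ring
  refine ⟨φ, hφ, .of_forall fun x => (hFeq _).symm.trans (hFφ x), ?_, hπφ, fun ψ _ hψ => ?_⟩
  · rw [hβφ]
    exact ((hG.sub (hφ.const_mul _)).sub (hπφ.const_mul _)).const_mul _
  · filter_upwards [hψ] with x hx
    exact (hFmono.strictMono hc).injective ((hFeq _).trans (hx.trans (hFφ x).symm))

/-- Lemma 3.2: for `Ω ⊆ ℝᵈ` measurable of finite measure, `β` nondecreasing continuous
with `β 0 = 0`, `π` `K`-Lipschitz, `0 < h < 1` with `h K < 1`, and `G ∈ L²(Ω)`, there is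
a function `φ ∈ L²(Ω)`, unique up to a.e. equality, with
`φ + h φ + h² β(φ) + h² π(φ) = G` a.e. in `Ω`, and moreover `β ∘ φ, π ∘ φ ∈ L²(Ω)`. -/
theorem discrete_phase_equation_L2_existence_uniqueness
    (d : ℕ) (Ω : Set (Fin d → ℝ)) (hΩmeas : MeasurableSet Ω)
    (hΩfin : volume Ω < ⊤)
    (β π : ℝ → ℝ) (hβmono : Monotone β) (hβcont : Continuous β) (hβ0 : β 0 = 0)
    (K : ℝ) (hK : 0 ≤ K) (hπ : ∀ x y : ℝ, |π x - π y| ≤ K * |x - y|)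
    (h : ℝ) (hh0 : 0 < h) (hh1 : h < 1) (hhK : h * K < 1)
    (G : (Fin d → ℝ) → ℝ) (hG : MemLp G 2 (volume.restrict Ω)) :
    ∃ φ : (Fin d → ℝ) → ℝ,
      MemLp φ 2 (volume.restrict Ω) ∧
      (∀ᵐ x ∂(volume.restrict Ω),
        φ x + h * φ x + h ^ 2 * β (φ x) + h ^ 2 * π (φ x) = G x) ∧
      MemLp (β ∘ φ) 2 (volume.restrict Ω) ∧
      MemLp (π ∘ φ) 2 (volume.restrict Ω) ∧
      ∀ ψ : (Fin d → ℝ) → ℝ,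
        MemLp ψ 2 (volume.restrict Ω) →
        (∀ᵐ x ∂(volume.restrict Ω),
          ψ x + h * ψ x + h ^ 2 * β (ψ x) + h ^ 2 * π (ψ x) = G x) →
        ψ =ᵐ[volume.restrict Ω] φ :=
  discrete_phase_equation_L2_existence_uniqueness_general d Ω hΩfin β π hβmono hβcont K hπ h hh0 hhK
    G hG
end

section
/- Let X be a real Banach space, T > 0, and let g : [0, T] → X be Bochner integrable. Let f : [0, T] → X satisfy f(t) = f(0) + ∫₀ᵗ g(s) ds for all t ∈ [0, T]. For a natural number N ≥ 1 set h = T/N and define the piecewise constant average f̄_h : (0, T] → X by f̄_h(t) = (1/h)·∫_{(k−1)h}^{kh} f(s) ds for t ∈ ((k−1)h, kh], 1 ≤ k ≤ N. Then (∫₀^T ‖f̄_h(t) − f(t)‖² dt)^{1/2} ≤ h^{1/2} · ∫₀^T ‖g(s)‖ ds. -/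
/-!
On a cell `I = (ih, (i+1)h]` the average of `f` is a convex combination of values of `f` on `I`,
and any two such values differ by at most `G i = ∫_I ‖g‖`; so `‖f̄_h - f‖ ≤ G i` on `I` and
`∫₀ᵀ ‖f̄_h - f‖² ≤ h ∑ G i² ≤ h (∑ G i)² = h (∫₀ᵀ ‖g‖)²`.
-/

open MeasureTheory intervalIntegral Set Finset

section

variable {X : Type*} [NormedAddCommGroup X] [NormedSpace ℝ X]

theorem norm_intervalAverage_sub_le [CompleteSpace X] {f : ℝ → X} {a b C : ℝ} {x : X}
    (hab : a < b) (hf : IntervalIntegrable f volume a b) (hC : ∀ s ∈ Ioc a b, ‖f s - x‖ ≤ C) :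
    ‖(⨍ s in a..b, f s) - x‖ ≤ C := by
  have hba : 0 < b - a := sub_pos.2 hab
  have hsub : (⨍ s in a..b, f s) - x = (b - a)⁻¹ • ∫ s in a..b, f s - x := by
    rw [interval_average_eq, integral_sub hf intervalIntegrable_const,
      intervalIntegral.integral_const, smul_sub, inv_smul_smul₀ hba.ne']
  have hint : ‖∫ s in a..b, f s - x‖ ≤ C * (b - a) := by
    refine (intervalIntegral.norm_integral_le_of_norm_le_const ?_).trans_eq (by rw [abs_of_pos hba])
    rwa [uIoc_of_le hab.le]
  rw [hsub, norm_smul, Real.norm_of_nonneg (inv_nonneg.2 hba.le), inv_mul_le_iff₀ hba, mul_comm]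
  exact hint

theorem continuousOn_of_eq_add_primitive {f g : ℝ → X} {a b : ℝ}
    (hg : IntegrableOn g (Icc a b)) (hf : ∀ t ∈ Icc a b, f t = f a + ∫ u in a..t, g u) :
    ContinuousOn f (Icc a b) :=
  (continuousOn_const (c := f a)).add (continuousOn_primitive hg) |>.congr fun t ht => by
    rw [hf t ht, integral_of_le ht.1]; rfl

theorem norm_sub_le_integral_norm_of_eq_add_primitive {f g : ℝ → X} {a b c d s t : ℝ}
    (hg : IntegrableOn g (Icc a b)) (hf : ∀ t ∈ Icc a b, f t = f a + ∫ u in a..t, g u)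
    (hcd : Icc c d ⊆ Icc a b) (hs : s ∈ Icc c d) (ht : t ∈ Icc c d) :
    ‖f s - f t‖ ≤ ∫ u in c..d, ‖g u‖ := by
  have hg_int : ∀ u ∈ Icc a b, IntervalIntegrable g volume a u := fun u hu =>
    (hg.mono_set (by rw [uIcc_of_le hu.1]; exact Icc_subset_Icc_right hu.2)).intervalIntegrable
  have hdiff : f s - f t = ∫ u in t..s, g u := by
    rw [hf s (hcd hs), hf t (hcd ht), add_sub_add_left_eq_sub,
      integral_interval_sub_left (hg_int s (hcd hs)) (hg_int t (hcd ht))]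
  rw [hdiff, integral_of_le (hs.1.trans hs.2)]
  refine norm_integral_le_integral_norm_uIoc.trans (setIntegral_mono_set ?_ ?_ ?_)
  · exact (hg.mono_set (Ioc_subset_Icc_self.trans hcd)).norm
  · exact Filter.Eventually.of_forall fun _ => norm_nonneg _
  · exact (Ioc_subset_Ioc (le_min ht.1 hs.1) (max_le ht.2 hs.2)).eventuallyLE

theorem norm_intervalAverage_sub_le_integral_norm [CompleteSpace X] {f g : ℝ → X}
    {a b c d t : ℝ} (hg : IntegrableOn g (Icc a b))
    (hf : ∀ t ∈ Icc a b, f t = f a + ∫ u in a..t, g u) (hcd : c < d) (hsub : Icc c d ⊆ Icc a b)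
    (ht : t ∈ Icc c d) :
    ‖(⨍ s in c..d, f s) - f t‖ ≤ ∫ u in c..d, ‖g u‖ :=
  norm_intervalAverage_sub_le hcd
    (((continuousOn_of_eq_add_primitive hg hf).mono hsub).intervalIntegrable_of_Icc hcd.le)
    fun _ hs => norm_sub_le_integral_norm_of_eq_add_primitive hg hf hsub (Ioc_subset_Icc_self hs) ht

theorem sum_integral_uniform_cells {F : ℝ → X} {h : ℝ} {N : ℕ} (hh : 0 ≤ h)
    (hF : IntervalIntegrable F volume 0 (N * h)) :
    ∑ i ∈ range N, ∫ t in i * h..(i + 1) * h, F t = ∫ t in 0..N * h, F t := by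
  have hmem : ∀ j ≤ N, (j : ℝ) * h ∈ uIcc 0 (N * h) := fun j hj => by
    rw [Set.uIcc_of_le (by positivity)]
    exact ⟨by positivity, by gcongr⟩
  have hcell : ∀ i < N, IntervalIntegrable F volume (i * h) ((i + 1) * h) := fun i hi =>
    hF.mono_set (uIcc_subset_uIcc (hmem i hi.le) (by simpa using hmem (i + 1) hi))
  simpa using sum_integral_adjacent_intervals (a := fun i : ℕ => (i : ℝ) * h) fun i hi => by
    simpa using hcell i hi

end

theorem integral_le_mul_sum_of_norm_le_on_cells {F : ℝ → ℝ} {h : ℝ} {N : ℕ} {c : ℕ → ℝ}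
    (hh : 0 < h) (hF : ∀ i < N, ∀ t ∈ Ioc (i * h) ((i + 1) * h), ‖F t‖ ≤ c i) :
    ∫ t in 0..N * h, F t ≤ h * ∑ i ∈ range N, c i := by
  by_cases hint : IntervalIntegrable F volume 0 (N * h)
  · rw [← sum_integral_uniform_cells hh.le hint, mul_sum]
    refine sum_le_sum fun i hi => (Real.le_norm_self _).trans ?_
    refine (intervalIntegral.norm_integral_le_of_norm_le_const (C := c i) ?_).trans_eq ?_
    · rw [uIoc_of_le (by gcongr; linarith)]
      exact hF i (mem_range.1 hi)
    · rw [show ((i : ℝ) + 1) * h - i * h = h by ring, abs_of_pos hh, mul_comm]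
  · -- a non-integrable `F` has integral `0`, and the `c i` are nonnegative
    have hc : ∀ i ∈ range N, 0 ≤ c i := fun i hi =>
      (norm_nonneg _).trans (hF i (mem_range.1 hi) _ ⟨by gcongr; linarith, le_rfl⟩)
    rw [integral_undef hint]
    exact mul_nonneg hh.le (sum_nonneg hc)

/-- `W^{1,1}` approximation estimate for local averages: if `f(t) = f(0) + ∫₀ᵗ g` with
`g` Bochner integrable on `[0, T]`, `h = T/N`, and `f̄_h` is the piecewise constant local
average of `f`, then `‖f̄_h - f‖_{L²(0,T;X)} ≤ h^{1/2} ∫₀ᵀ ‖g‖`. -/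
theorem piecewise_average_L2_error
    {X : Type*} [NormedAddCommGroup X] [NormedSpace ℝ X] [CompleteSpace X]
    (T : ℝ) (hT : 0 < T) (g f : ℝ → X)
    (hg : MeasureTheory.IntegrableOn g (Set.Icc 0 T))
    (hf : ∀ t ∈ Set.Icc (0 : ℝ) T, f t = f 0 + ∫ s in (0 : ℝ)..t, g s)
    (N : ℕ) (hN : 1 ≤ N) (h : ℝ) (hhdef : h = T / N)
    (fbar : ℝ → X)
    (hfbar : ∀ k : ℕ, 1 ≤ k → k ≤ N →
      ∀ t ∈ Set.Ioc (((k : ℝ) - 1) * h) ((k : ℝ) * h),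
        fbar t = (1 / h) • ∫ s in (((k : ℝ) - 1) * h)..((k : ℝ) * h), f s) :
    Real.sqrt (∫ t in (0 : ℝ)..T, ‖fbar t - f t‖ ^ 2)
      ≤ Real.sqrt h * ∫ s in (0 : ℝ)..T, ‖g s‖ := by
  have hN₀ : (0 : ℝ) < N := by exact_mod_cast hN
  have hh : 0 < h := by rw [hhdef]; positivity
  have hNh : (N : ℝ) * h = T := by rw [hhdef]; field_simp
  have hcell : ∀ i < N, Icc ((i : ℝ) * h) ((i + 1) * h) ⊆ Icc 0 T := fun i hi => by
    rw [← hNh]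
    exact Icc_subset_Icc (by positivity) (by gcongr; exact_mod_cast hi)
  set G : ℕ → ℝ := fun i => ∫ s in i * h..(i + 1) * h, ‖g s‖
  have herr : ∀ i < N, ∀ t ∈ Ioc ((i : ℝ) * h) ((i + 1) * h), ‖‖fbar t - f t‖ ^ 2‖ ≤ G i ^ 2 := by
    intro i hi t ht
    have hfbar_t : fbar t = ⨍ s in i * h..(i + 1) * h, f s := by
      rw [hfbar (i + 1) (by omega) hi t (by simpa using ht), interval_average_eq]
      push_cast
      rw [add_sub_cancel_right, add_mul, one_mul, add_sub_cancel_left, one_div]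
    rw [norm_pow, norm_norm, hfbar_t]
    gcongr
    exact norm_intervalAverage_sub_le_integral_norm hg hf (by gcongr; linarith) (hcell i hi)
      (Ioc_subset_Icc_self ht)
  have hG : ∑ i ∈ range N, G i = ∫ s in 0..T, ‖g s‖ := hNh ▸ sum_integral_uniform_cells hh.le
    (hNh ▸ (intervalIntegrable_iff_integrableOn_Icc_of_le hT.le).2 hg.norm)
  have hG₀ : ∀ i ∈ range N, 0 ≤ G i := fun i _ =>
    intervalIntegral.integral_nonneg (by gcongr; linarith) fun _ _ => norm_nonneg _
  have hL2 : ∫ t in 0..T, ‖fbar t - f t‖ ^ 2 ≤ h * (∫ s in 0..T, ‖g s‖) ^ 2 := calc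
    _ ≤ h * ∑ i ∈ range N, G i ^ 2 := hNh ▸ integral_le_mul_sum_of_norm_le_on_cells hh herr
    _ ≤ h * (∑ i ∈ range N, G i) ^ 2 := by gcongr; exact sum_sq_le_sq_sum_of_nonneg hG₀
    _ = h * (∫ s in 0..T, ‖g s‖) ^ 2 := by rw [hG]
  refine (Real.sqrt_le_sqrt hL2).trans_eq ?_
  rw [Real.sqrt_mul hh.le, Real.sqrt_sq (hG ▸ sum_nonneg hG₀)]
end
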